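/- arXiv:2509.05664 — 4 statements merged into one kernel-verified Lean document; each statement's English description precedes it below -/
import Mathlib

section
/- Let α > 0, ω > 0, ν ∈ (0, π/2), τ ∈ (0, π) with τ > ν. Then the contour of integration can be shifted upward by iν without crossing any pole: ∫_{−∞}^{∞} e^{−α ω cosh(t − iν)} sinh(t) / (cosh t − cos τ) dt = ∫_{−∞}^{∞} e^{−α ω cosh s} sinh(s + iν) / (cosh(s + iν) − cos τ) ds. -/
/-!
Write `f z = exp (-αω cosh (z - iν)) sinh z / (cosh z - cos τ)`: the left side is the integral
of `f` along `ℝ`, the right side its integral along `ℝ + iν`. Since `Re (cosh (x + iy)) =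
cosh x cos y`, on the closed strip `0 ≤ Im z ≤ ν` we get `Re (cosh z - cos τ) ≥ cos ν - cos τ`,
which is positive as `ν < τ < π`; so `f` is holomorphic there, and
`‖f (x + iy)‖ ≤ exp (-αω cos ν cosh x) cosh x / (cos ν - cos τ)`, which is dominated by a
Gaussian in `x`. Cauchy's theorem on the rectangles `[-R, R] × [0, ν]` then gives the identity in
the limit `R → ∞`, the vertical sides being at most `ν` times that Gaussian at `±R`.
-/

open Complex MeasureTheory Filter Set Topology intervalIntegral
open scoped Interval

section StripShift

variable {E : Type*} [NormedAddCommGroup E] {f : ℂ → E} {g : ℝ → ℝ} {h : ℝ}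

theorem integrable_comp_add_mul_I_of_strip (hf : ContinuousOn f (im ⁻¹' [[0, h]]))
    (hfg : ∀ z : ℂ, z.im ∈ [[0, h]] → ‖f z‖ ≤ g z.re) (hg : Integrable g)
    {y : ℝ} (hy : y ∈ [[0, h]]) : Integrable fun x : ℝ ↦ f (x + y * I) := by
  have hline (x : ℝ) : ((x : ℂ) + y * I).im ∈ [[0, h]] := by simpa using hy
  refine hg.mono' ?_ (Eventually.of_forall fun x ↦ by simpa using hfg _ (hline x))
  exact (hf.comp_continuous (by fun_prop) hline).aestronglyMeasurable

theorem tendsto_integral_vertical_of_strip [NormedSpace ℝ E]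
    (hfg : ∀ z : ℂ, z.im ∈ [[0, h]] → ‖f z‖ ≤ g z.re)
    (hg0 : Tendsto g (cocompact ℝ) (𝓝 0)) :
    Tendsto (fun x : ℝ ↦ ∫ y in 0..h, f (x + y * I)) (cocompact ℝ) (𝓝 0) := by
  have hbound (x : ℝ) : ‖∫ y in 0..h, f (x + y * I)‖ ≤ g x * |h - 0| :=
    norm_integral_le_of_norm_le_const fun y hy ↦ by
      simpa using hfg (x + y * I) (by simpa using uIoc_subset_uIcc hy)
  exact squeeze_zero_norm hbound (by simpa using hg0.mul_const |h - 0|)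

theorem integral_comp_add_mul_I_eq_of_strip [NormedSpace ℂ E] [CompleteSpace E]
    (hf : DifferentiableOn ℂ f (im ⁻¹' [[0, h]]))
    (hfg : ∀ z : ℂ, z.im ∈ [[0, h]] → ‖f z‖ ≤ g z.re) (hg : Integrable g)
    (hg0 : Tendsto g (cocompact ℝ) (𝓝 0)) :
    ∫ x : ℝ, f (x + h * I) = ∫ x : ℝ, f x := by
  set V : ℝ → E := fun x ↦ ∫ y in 0..h, f (x + y * I)
  have hV : Tendsto V (cocompact ℝ) (𝓝 0) := tendsto_integral_vertical_of_strip hfg hg0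
  have hrect (R : ℝ) :
      (∫ x in -R..R, f x) - ∫ x in -R..R, f (x + h * I) = I • V (-R) - I • V R := by
    have hcauchy := integral_boundary_rect_eq_zero_of_differentiableOn f (-R) (R + h * I)
      (hf.mono fun z hz ↦ by simpa using hz.2)
    simp only [neg_re, ofReal_re, add_re, mul_re, I_re, I_im, ofReal_im, neg_im, add_im, mul_im,
      mul_zero, mul_one, sub_zero, add_zero, zero_add, neg_zero, ofReal_zero, zero_mul,
      ofReal_neg] at hcauchy
    simp only [V, ofReal_neg]
    rw [← sub_eq_zero, ← hcauchy]
    abel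
  have hedges := (intervalIntegral_tendsto_integral
      (by simpa using integrable_comp_add_mul_I_of_strip hf.continuousOn hfg hg left_mem_uIcc)
      tendsto_neg_atTop_atBot tendsto_id).sub (intervalIntegral_tendsto_integral
      (integrable_comp_add_mul_I_of_strip hf.continuousOn hfg hg right_mem_uIcc)
      tendsto_neg_atTop_atBot tendsto_id)
  have hsides : Tendsto (fun R : ℝ ↦ I • V (-R) - I • V R) atTop (𝓝 0) := by
    simpa using
      ((hV.comp (tendsto_neg_atTop_atBot.mono_right atBot_le_cocompact)).const_smul I).sub
        ((hV.comp atTop_le_cocompact).const_smul I)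
  exact (sub_eq_zero.mp (tendsto_nhds_unique (hedges.congr hrect) hsides)).symm

end StripShift

theorem Complex.cosh_re (z : ℂ) : (cosh z).re = Real.cosh z.re * Real.cos z.im := by
  conv_lhs => rw [← re_add_im z]
  rw [cosh_add, cosh_mul_I, sinh_mul_I]
  simp [← ofReal_cosh, ← ofReal_sinh, ← ofReal_cos, ← ofReal_sin]

theorem Complex.norm_sinh_le (z : ℂ) : ‖sinh z‖ ≤ Real.cosh z.re := by
  calc ‖sinh z‖ = ‖exp z - exp (-z)‖ / 2 := by
        rw [← two_sinh, norm_mul, Complex.norm_two, mul_div_cancel_left₀ _ two_ne_zero]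
    _ ≤ (‖exp z‖ + ‖exp (-z)‖) / 2 := by gcongr; exact norm_sub_le _ _
    _ = Real.cosh z.re := by rw [norm_exp, norm_exp, neg_re, Real.cosh_eq]

theorem Complex.cosh_re_mul_cos_le {z : ℂ} {ν : ℝ} (hz : |z.im| ≤ ν) (hν : ν ≤ Real.pi) :
    Real.cosh z.re * Real.cos ν ≤ (cosh z).re := by
  rw [cosh_re, ← Real.cos_abs z.im]
  exact mul_le_mul_of_nonneg_left (Real.cos_le_cos_of_nonneg_of_le_pi (abs_nonneg _) hν hz)
    (Real.cosh_pos _).le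

theorem Real.sq_div_four_le_cosh (x : ℝ) : x ^ 2 / 4 ≤ cosh x := by
  rw [← cosh_abs, cosh_eq]
  have hexp := quadratic_le_exp_of_nonneg (abs_nonneg x)
  rw [sq_abs] at hexp
  linarith [abs_nonneg x, exp_pos (-|x|)]

theorem Real.exp_neg_mul_cosh_mul_cosh_le {c : ℝ} (hc : 0 < c) (x : ℝ) :
    exp (-(c * cosh x)) * cosh x ≤ 2 / c * exp (-(c / 8) * x ^ 2) := by
  have hsplit : exp (-(c * cosh x)) * cosh x =
      cosh x * exp (-(c / 2 * cosh x)) * exp (-(c / 2 * cosh x)) := by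
    rw [mul_assoc, ← exp_add]; ring_nf
  have hpoly : cosh x * exp (-(c / 2 * cosh x)) ≤ 2 / c := by
    rw [exp_neg, mul_inv_le_iff₀ (exp_pos _), div_mul_eq_mul_div, le_div_iff₀ hc]
    linarith [add_one_le_exp (c / 2 * cosh x)]
  have hgauss : exp (-(c / 2 * cosh x)) ≤ exp (-(c / 8) * x ^ 2) := by
    rw [exp_le_exp]
    nlinarith [mul_le_mul_of_nonneg_left (sq_div_four_le_cosh x) hc.le]
  rw [hsplit]
  exact mul_le_mul hpoly hgauss (exp_nonneg _) (by positivity)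

theorem tendsto_const_mul_exp_neg_mul_sq_cocompact {b : ℝ} (hb : 0 < b) (C : ℝ) :
    Tendsto (fun x : ℝ ↦ C * Real.exp (-b * x ^ 2)) (cocompact ℝ) (𝓝 0) := by
  simpa using (tendsto_rpow_abs_mul_exp_neg_mul_sq_cocompact hb 0).const_mul C

noncomputable def shiftIntegrand (c ν τ : ℝ) (z : ℂ) : ℂ :=
  exp (-(c : ℂ) * cosh (z - I * ν)) * sinh z / (cosh z - Real.cos τ)

section ShiftIntegrand

variable {ν τ : ℝ} {z : ℂ}

theorem sub_cos_le_norm_cosh_sub_cos (hν : ν ≤ Real.pi / 2) (hz : z.im ∈ Icc 0 ν) :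
    Real.cos ν - Real.cos τ ≤ ‖cosh z - Real.cos τ‖ := by
  have hcos : 0 ≤ Real.cos ν :=
    Real.cos_nonneg_of_mem_Icc ⟨by linarith [hz.1, hz.2, Real.pi_pos], hν⟩
  have hre := cosh_re_mul_cos_le (z := z) (ν := ν) (by rw [abs_of_nonneg hz.1]; exact hz.2)
    (by linarith [Real.pi_pos])
  refine le_trans ?_ (re_le_norm _)
  rw [sub_re, ofReal_re]
  nlinarith [Real.one_le_cosh z.re]

theorem norm_shiftIntegrand_le {c : ℝ} (hc : 0 ≤ c) (hν : ν ≤ Real.pi / 2)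
    (hτ : Real.cos τ < Real.cos ν) (hz : z.im ∈ Icc 0 ν) :
    ‖shiftIntegrand c ν τ z‖ ≤ Real.exp (-(c * Real.cos ν * Real.cosh z.re)) * Real.cosh z.re /
      (Real.cos ν - Real.cos τ) := by
  have hexp : ‖exp (-(c : ℂ) * cosh (z - I * ν))‖ ≤
      Real.exp (-(c * Real.cos ν * Real.cosh z.re)) := by
    rw [norm_exp, Real.exp_le_exp]
    have hre := cosh_re_mul_cos_le (z := z - I * ν) (ν := ν)
      (by
        rw [show (z - I * ν).im = z.im - ν by simp, abs_le]
        constructor <;> linarith [hz.1, hz.2])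
      (by linarith [Real.pi_pos])
    simp only [sub_re, mul_re, I_re, I_im, ofReal_re, ofReal_im, zero_mul, one_mul,
      sub_zero] at hre
    simp only [neg_mul, neg_re, mul_re, ofReal_re, ofReal_im, zero_mul, sub_zero]
    nlinarith [mul_le_mul_of_nonneg_left hre hc]
  rw [shiftIntegrand, norm_div, norm_mul]
  exact div_le_div₀ (by positivity)
    (mul_le_mul hexp (norm_sinh_le z) (norm_nonneg _) (Real.exp_nonneg _))
    (sub_pos.2 hτ) (sub_cos_le_norm_cosh_sub_cos hν hz)

theorem differentiableOn_shiftIntegrand (c : ℝ) (hν : ν ≤ Real.pi / 2)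
    (hτ : Real.cos τ < Real.cos ν) :
    DifferentiableOn ℂ (shiftIntegrand c ν τ) (im ⁻¹' Icc 0 ν) := by
  intro z hz
  refine (DifferentiableAt.div (by fun_prop) (by fun_prop) fun hzero ↦ ?_).differentiableWithinAt
  have hpos := sub_cos_le_norm_cosh_sub_cos (τ := τ) hν hz
  rw [hzero, norm_zero] at hpos
  linarith

end ShiftIntegrand

/-- when `τ > ν`, shifting the contour upward by `iν` crosses no pole, so the
two integrals agree. -/
theorem stmt2 (α ω ν τ : ℝ) (hα : 0 < α) (hω : 0 < ω)
    (hν : ν ∈ Set.Ioo 0 (Real.pi / 2)) (hτ : τ ∈ Set.Ioo 0 Real.pi) (hντ : ν < τ) :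
    ∫ t : ℝ, Complex.exp (-(α * ω : ℝ) * Complex.cosh ((t : ℂ) - Complex.I * ν)) *
        Complex.sinh (t : ℂ) / (Complex.cosh (t : ℂ) - (Real.cos τ : ℂ)) =
      ∫ s : ℝ, Complex.exp (-(α * ω : ℝ) * Complex.cosh (s : ℂ)) *
        Complex.sinh ((s : ℂ) + Complex.I * ν) /
          (Complex.cosh ((s : ℂ) + Complex.I * ν) - (Real.cos τ : ℂ)) := by
  have hcosν : 0 < Real.cos ν :=
    Real.cos_pos_of_mem_Ioo ⟨by linarith [hν.1, Real.pi_pos], hν.2⟩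
  have hcosτν : Real.cos τ < Real.cos ν :=
    Real.cos_lt_cos_of_nonneg_of_le_pi hν.1.le hτ.2.le hντ
  set c := α * ω * Real.cos ν
  have hc : 0 < c := by positivity
  have hδ : 0 < Real.cos ν - Real.cos τ := sub_pos.2 hcosτν
  have hstrip : [[0, ν]] = Icc 0 ν := uIcc_of_le hν.1.le
  have hshift := integral_comp_add_mul_I_eq_of_strip (f := shiftIntegrand (α * ω) ν τ) (h := ν)
    (g := fun x ↦ 2 / c / (Real.cos ν - Real.cos τ) * Real.exp (-(c / 8) * x ^ 2))
    (hstrip ▸ differentiableOn_shiftIntegrand (α * ω) hν.2.le hcosτν)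
    (fun z hz ↦ (norm_shiftIntegrand_le (by positivity) hν.2.le hcosτν (hstrip ▸ hz)).trans <|
      (div_le_div_of_nonneg_right (Real.exp_neg_mul_cosh_mul_cosh_le hc z.re) hδ.le).trans_eq
        (by ring))
    ((integrable_exp_neg_mul_sq (by positivity)).const_mul _)
    (tendsto_const_mul_exp_neg_mul_sq_cocompact (by positivity) _)
  simp only [shiftIntegrand, mul_comm (ν : ℂ) I, add_sub_cancel_right] at hshift
  exact hshift.symm
end

section
/- Let a ∈ (0, 1) be fixed, and let (u_k)_{k≥0} be the Maclaurin coefficients in powers of σ² of the real-analytic function σ ↦ 1/[(σ² + a²)√(1+σ²)] near σ = 0. Then for every n ∈ ℕ, as z → ∞ along the positive reals, ∫_{−∞}^{∞} e^{−z σ²} / [(σ² + a²)√(1+σ²)] dσ − √(π/z) Σ_{k=0}^{n} u_k (1/2)_k z^{−k} = O(z^{−n − 3/2}), where (1/2)_k = Γ(1/2 + k)/Γ(1/2) is the Pochhammer symbol. -/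
/-!
Watson's lemma in its simplest form. The integrand's non-Gaussian factor
`f σ = 1 / ((σ² + a²) √(1 + σ²))` is bounded on `ℝ` and equals its Maclaurin series near `0`, so
it differs from the partial sum `P_n σ = ∑_{k ≤ n} u_k σ^{2k}` by at most `C σ^{2(n+1)}` on all of
`ℝ`: near `0` the tail is dominated by a geometric series, away from `0` both `|f|` and `|P_n|`
are `O(σ^{2(n+1)})`. Integrating `P_n` against `e^{-zσ²}` with the Gaussian moments
`∫ σ^{2k} e^{-zσ²} dσ = Γ(k + 1/2) z^{-k-1/2} = √(π/z) (1/2)_k z^{-k}` produces the expansion, and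
the remainder contributes at most `C Γ(n + 3/2) z^{-n-3/2}`.
-/

open Filter Asymptotics

open MeasureTheory Real Set Finset

section GaussianMoments

variable {b z : ℝ}

theorem integral_pow_two_mul_mul_exp_neg_mul_sq (hb : 0 < b) (m : ℕ) :
    ∫ x : ℝ, x ^ (2 * m) * exp (-b * x ^ 2) = Gamma (m + 1 / 2) * b ^ (-(m : ℝ) - 1 / 2) := by
  have h_even : ∫ x : ℝ, x ^ (2 * m) * exp (-b * x ^ 2)
      = 2 * ∫ x in Ioi (0 : ℝ), x ^ ((2 * m : ℕ) : ℝ) * exp (-b * x ^ (2 : ℝ)) := by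
    calc ∫ x : ℝ, x ^ (2 * m) * exp (-b * x ^ 2)
        = 2 * ∫ x in Ioi (0 : ℝ), x ^ (2 * m) * exp (-b * x ^ 2) := by
          rw [← integral_comp_abs (f := fun x => x ^ (2 * m) * exp (-b * x ^ 2))]
          simp_rw [pow_mul, sq_abs]
      _ = _ := by
          congr 1
          refine setIntegral_congr_fun measurableSet_Ioi fun x _ => ?_
          rw [rpow_natCast, rpow_two]
  rw [h_even, integral_rpow_mul_exp_neg_mul_rpow two_pos
    (neg_one_lt_zero.trans_le (Nat.cast_nonneg _)) hb]
  push_cast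
  ring_nf

theorem integrable_exp_neg_mul_sq_mul_pow (hz : 0 < z) (m : ℕ) :
    Integrable fun σ : ℝ => exp (-z * σ ^ 2) * σ ^ m := by
  simpa [rpow_natCast, mul_comm] using
    integrable_rpow_mul_exp_neg_mul_sq hz (s := m) (neg_one_lt_zero.trans_le (Nat.cast_nonneg _))

theorem integral_exp_neg_mul_sq_mul_pow_two_mul (hz : 0 < z) (k : ℕ) :
    ∫ σ : ℝ, exp (-z * σ ^ 2) * σ ^ (2 * k) =
      √(π / z) * (Gamma (1 / 2 + k) / Gamma (1 / 2)) / z ^ k := by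
  simp_rw [mul_comm (exp _)]
  rw [integral_pow_two_mul_mul_exp_neg_mul_sq hz, Gamma_one_half_eq, sqrt_div pi_nonneg,
    show -(k : ℝ) - 1 / 2 = -((k : ℝ) + 1 / 2) by ring, rpow_neg hz.le, rpow_add hz,
    rpow_natCast, ← sqrt_eq_rpow, add_comm (k : ℝ)]
  have := sqrt_pos.2 hz
  have := sqrt_pos.2 pi_pos
  field_simp

end GaussianMoments

section WatsonEstimate

variable {z : ℝ}

theorem integrable_exp_neg_mul_sq_mul_sum (hz : 0 < z) (u : ℕ → ℝ) (N : ℕ) :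
    Integrable fun σ : ℝ => exp (-z * σ ^ 2) * ∑ k ∈ range N, u k * σ ^ (2 * k) := by
  simp_rw [mul_sum, mul_left_comm (exp _)]
  exact integrable_finsetSum _ fun k _ => (integrable_exp_neg_mul_sq_mul_pow hz _).const_mul _

theorem integral_exp_neg_mul_sq_mul_sum (hz : 0 < z) (u : ℕ → ℝ) (N : ℕ) :
    ∫ σ : ℝ, exp (-z * σ ^ 2) * ∑ k ∈ range N, u k * σ ^ (2 * k) =
      √(π / z) * ∑ k ∈ range N, u k * (Gamma (1 / 2 + k) / Gamma (1 / 2)) / z ^ k := by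
  simp_rw [mul_sum, mul_left_comm (exp _)]
  rw [integral_finsetSum _ fun k _ => (integrable_exp_neg_mul_sq_mul_pow hz _).const_mul _]
  refine sum_congr rfl fun k _ => ?_
  rw [integral_const_mul, integral_exp_neg_mul_sq_mul_pow_two_mul hz]
  ring

theorem abs_integral_exp_neg_mul_sq_mul_sub_le {f : ℝ → ℝ} {u : ℕ → ℝ} (hf : AEStronglyMeasurable f)
    {C : ℝ} {N : ℕ} (hC : ∀ σ, |f σ - ∑ k ∈ range N, u k * σ ^ (2 * k)| ≤ C * σ ^ (2 * N))
    (hz : 0 < z) :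
    |(∫ σ : ℝ, exp (-z * σ ^ 2) * f σ) -
        √(π / z) * ∑ k ∈ range N, u k * (Gamma (1 / 2 + k) / Gamma (1 / 2)) / z ^ k| ≤
      C * Gamma (N + 1 / 2) * z ^ (-(N : ℝ) - 1 / 2) := by
  set p := fun σ : ℝ => ∑ k ∈ range N, u k * σ ^ (2 * k)
  have h_dom : ∀ σ, ‖exp (-z * σ ^ 2) * (f σ - p σ)‖ ≤ C * (σ ^ (2 * N) * exp (-z * σ ^ 2)) := by
    intro σ
    rw [norm_mul, norm_of_nonneg (exp_pos _).le, Real.norm_eq_abs]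
    calc _ ≤ exp (-z * σ ^ 2) * (C * σ ^ (2 * N)) := by gcongr; exact hC σ
      _ = _ := by ring
  have h_int_dom : Integrable fun σ : ℝ => C * (σ ^ (2 * N) * exp (-z * σ ^ 2)) := by
    simpa only [mul_comm (exp _)] using (integrable_exp_neg_mul_sq_mul_pow hz (2 * N)).const_mul C
  have h_int_rem : Integrable fun σ => exp (-z * σ ^ 2) * (f σ - p σ) :=
    h_int_dom.mono' (by fun_prop) (.of_forall h_dom)
  have h_int_p := integrable_exp_neg_mul_sq_mul_sum hz u N
  have h_int_f : Integrable fun σ => exp (-z * σ ^ 2) * f σ :=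
    (h_int_rem.add h_int_p).congr (.of_forall fun σ => by simp only [Pi.add_apply]; ring)
  rw [← integral_exp_neg_mul_sq_mul_sum hz, ← integral_sub h_int_f h_int_p, ← Real.norm_eq_abs]
  simp_rw [← mul_sub]
  calc _ ≤ ∫ σ : ℝ, C * (σ ^ (2 * N) * exp (-z * σ ^ 2)) :=
        norm_integral_le_of_norm_le h_int_dom (.of_forall h_dom)
    _ = _ := by rw [integral_const_mul, integral_pow_two_mul_mul_exp_neg_mul_sq hz, mul_assoc]

theorem isBigO_integral_exp_neg_mul_sq_mul_sub {f : ℝ → ℝ} {u : ℕ → ℝ} (hf : AEStronglyMeasurable f)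
    {C : ℝ} {N : ℕ} (hC : ∀ σ, |f σ - ∑ k ∈ range N, u k * σ ^ (2 * k)| ≤ C * σ ^ (2 * N)) :
    (fun z : ℝ => (∫ σ : ℝ, exp (-z * σ ^ 2) * f σ) -
        √(π / z) * ∑ k ∈ range N, u k * (Gamma (1 / 2 + k) / Gamma (1 / 2)) / z ^ k)
      =O[atTop] fun z : ℝ => z ^ (-(N : ℝ) - 1 / 2) := by
  refine isBigO_iff.2 ⟨C * Gamma (N + 1 / 2), ?_⟩
  filter_upwards [eventually_gt_atTop 0] with z hz
  rw [Real.norm_eq_abs, norm_of_nonneg (rpow_nonneg hz.le _)]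
  exact abs_integral_exp_neg_mul_sq_mul_sub_le hf hC hz

end WatsonEstimate

section PowerSeriesRemainder

theorem exists_abs_tsum_nat_add_le_mul_pow {u : ℕ → ℝ} {ρ : ℝ} (hρ : 0 < ρ)
    (hs : Summable fun k => u k * ρ ^ k) (N : ℕ) :
    ∃ C, ∀ t, 0 ≤ t → t ≤ ρ / 2 → |∑' i, u (i + N) * t ^ (i + N)| ≤ C * t ^ N := by
  obtain ⟨M, hM⟩ := (hs.tendsto_atTop_zero.abs.bddAbove_range :
    BddAbove (Set.range fun k => |u k * ρ ^ k|))
  have hM' : ∀ k, |u k| ≤ M / ρ ^ k := fun k => by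
    rw [le_div_iff₀ (by positivity), ← abs_of_pos (pow_pos hρ k), ← abs_mul]
    exact hM (Set.mem_range_self k)
  have hM₀ : 0 ≤ M := (abs_nonneg _).trans (hM (Set.mem_range_self 0))
  refine ⟨M / ρ ^ N * 2, fun t ht₀ ht => ?_⟩
  have hq : t / ρ ≤ 1 / 2 := by rw [div_le_iff₀ hρ]; linarith
  have h_term : ∀ i, ‖u (i + N) * t ^ (i + N)‖ ≤ M / ρ ^ N * t ^ N * (1 / 2) ^ i := fun i => by
    calc ‖u (i + N) * t ^ (i + N)‖ ≤ M / ρ ^ (i + N) * t ^ (i + N) := by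
          rw [Real.norm_eq_abs, abs_mul, abs_of_nonneg (pow_nonneg ht₀ _)]
          gcongr
          exact hM' _
      _ = M / ρ ^ N * t ^ N * (t / ρ) ^ i := by rw [div_pow]; field_simp; ring
      _ ≤ M / ρ ^ N * t ^ N * (1 / 2) ^ i := by
          gcongr
  rw [← Real.norm_eq_abs]
  exact (tsum_of_norm_bounded (hasSum_geometric_two.mul_left _) h_term).trans_eq (by ring)

theorem abs_sum_range_mul_pow_le (u : ℕ → ℝ) (N : ℕ) {δ t : ℝ} (hδ : 0 < δ) (ht : δ ≤ t) :
    |∑ k ∈ range N, u k * t ^ k| ≤ (∑ k ∈ range N, |u k| * δ ^ k) * (t / δ) ^ N := by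
  have h_ratio : 1 ≤ t / δ := (one_le_div hδ).2 ht
  rw [sum_mul]
  refine (abs_sum_le_sum_abs _ _).trans (sum_le_sum fun k hk => ?_)
  calc |u k * t ^ k| = |u k| * δ ^ k * (t / δ) ^ k := by
        rw [abs_mul, abs_of_nonneg (pow_nonneg (hδ.le.trans ht) _), mul_assoc, ← mul_pow,
          mul_div_cancel₀ _ hδ.ne']
    _ ≤ |u k| * δ ^ k * (t / δ) ^ N := by
        gcongr
        exact (mem_range.1 hk).le

theorem exists_abs_sub_sum_range_le_mul_pow {f : ℝ → ℝ} {u : ℕ → ℝ} {r B : ℝ} (hr : 0 < r)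
    (hB : ∀ t, 0 ≤ t → |f t| ≤ B) (hu : ∀ t, 0 ≤ t → t < r → HasSum (fun k => u k * t ^ k) (f t))
    (N : ℕ) : ∃ C, ∀ t, 0 ≤ t → |f t - ∑ k ∈ range N, u k * t ^ k| ≤ C * t ^ N := by
  set δ := r / 4 with hδ_def
  have hδ : 0 < δ := by positivity
  obtain ⟨C₁, hC₁⟩ := exists_abs_tsum_nat_add_le_mul_pow (half_pos hr)
    (hu _ (half_pos hr).le (half_lt_self hr)).summable N
  set S := ∑ k ∈ range N, |u k| * δ ^ k
  refine ⟨max C₁ ((B + S) / δ ^ N), fun t ht₀ => ?_⟩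
  rcases le_or_gt t δ with ht | ht
  · have h_tail := (hu t ht₀ (by linarith [hδ_def])).summable.sum_add_tsum_nat_add N
    rw [(hu t ht₀ (by linarith [hδ_def])).tsum_eq] at h_tail
    calc |f t - ∑ k ∈ range N, u k * t ^ k| = |∑' i, u (i + N) * t ^ (i + N)| := by
          rw [← h_tail, add_sub_cancel_left]
      _ ≤ C₁ * t ^ N := hC₁ t ht₀ (by linarith [hδ_def])
      _ ≤ _ := by gcongr; exact le_max_left _ _
  · have h_pow : 1 ≤ (t / δ) ^ N := one_le_pow₀ ((one_le_div hδ).2 ht.le)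
    have hB₀ : 0 ≤ B := (abs_nonneg _).trans (hB 0 le_rfl)
    calc |f t - ∑ k ∈ range N, u k * t ^ k|
        ≤ |f t| + |∑ k ∈ range N, u k * t ^ k| := abs_sub _ _
      _ ≤ B * (t / δ) ^ N + S * (t / δ) ^ N := by
          gcongr
          · exact (hB t ht₀).trans (le_mul_of_one_le_right hB₀ h_pow)
          · exact abs_sum_range_mul_pow_le u N hδ ht.le
      _ = (B + S) / δ ^ N * t ^ N := by rw [div_pow]; field_simp
      _ ≤ _ := by gcongr; exact le_max_right _ _

end PowerSeriesRemainder

theorem abs_one_div_add_sq_mul_sqrt_le {a t : ℝ} (ha : a ≠ 0) (ht : 0 ≤ t) :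
    |1 / ((t + a ^ 2) * √(1 + t))| ≤ 1 / a ^ 2 := by
  rw [abs_of_nonneg (by positivity)]
  gcongr
  calc a ^ 2 ≤ t + a ^ 2 := by linarith
    _ ≤ (t + a ^ 2) * √(1 + t) := le_mul_of_one_le_right (by positivity) (by simp [ht])

/-- Laplace-type asymptotic expansion of
`U(a,z) = ∫ e^{-zσ²}/((σ²+a²)√(1+σ²)) dσ` with coefficients the Maclaurin coefficients
`u_k` (in powers of `σ²`) of the integrand's non-Gaussian factor. -/
theorem stmt11 (a : ℝ) (ha : a ∈ Set.Ioo (0 : ℝ) 1) (u : ℕ → ℝ) (r : ℝ) (hr : 0 < r)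
    (hu : ∀ σ : ℝ, |σ| < r →
      HasSum (fun k : ℕ => u k * σ ^ (2 * k))
        (1 / ((σ ^ 2 + a ^ 2) * Real.sqrt (1 + σ ^ 2)))) :
    ∀ n : ℕ,
      (fun z : ℝ =>
          (∫ σ : ℝ, Real.exp (-z * σ ^ 2) / ((σ ^ 2 + a ^ 2) * Real.sqrt (1 + σ ^ 2))) -
            Real.sqrt (Real.pi / z) *
              ∑ k ∈ Finset.range (n + 1),
                u k * (Real.Gamma (1 / 2 + k) / Real.Gamma (1 / 2)) / z ^ k)
        =O[atTop] fun z : ℝ => z ^ (-(n : ℝ) - 3 / 2) := by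
  intro n
  have hu_sq : ∀ t, 0 ≤ t → t < r ^ 2 →
      HasSum (fun k => u k * t ^ k) (1 / ((t + a ^ 2) * √(1 + t))) := fun t ht htr => by
    have h := hu √t (by rwa [abs_of_nonneg (sqrt_nonneg t), sqrt_lt' hr])
    simpa only [pow_mul, sq_sqrt ht] using h
  obtain ⟨C, hC⟩ := exists_abs_sub_sum_range_le_mul_pow (pow_pos hr 2)
    (fun t ht => abs_one_div_add_sq_mul_sqrt_le ha.1.ne' ht) hu_sq (n + 1)
  have h_rem : ∀ σ : ℝ, |1 / ((σ ^ 2 + a ^ 2) * √(1 + σ ^ 2)) -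
      ∑ k ∈ range (n + 1), u k * σ ^ (2 * k)| ≤ C * σ ^ (2 * (n + 1)) := fun σ => by
    simpa only [pow_mul] using hC (σ ^ 2) (sq_nonneg σ)
  have h_meas : Measurable fun σ : ℝ => 1 / ((σ ^ 2 + a ^ 2) * √(1 + σ ^ 2)) := by fun_prop
  convert isBigO_integral_exp_neg_mul_sq_mul_sub h_meas.aestronglyMeasurable h_rem using 3
  · simp only [mul_one_div]
  · push_cast; ring
end

section
/- For all a > 0 and z > 0, ∫_{−∞}^{∞} e^{−z σ²} / (σ² + a²) dσ = (π/a) e^{z a²} erfc(a √z), where erfc(x) = (2/√π) ∫_x^∞ e^{−t²} dt is the complementary error function. -/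
/-- The complementary error function `erfc(x) = (2/√π) ∫_x^∞ e^{-t²} dt`. -/
noncomputable def erfc (x : ℝ) : ℝ :=
  2 / Real.sqrt Real.pi * ∫ t in Set.Ioi x, Real.exp (-t ^ 2)

/-!
Write `e^{-zσ²}/(σ²+a²) = e^{za²} ∫_{√z}^∞ 2x e^{-(σ²+a²)x²} dx` and exchange the two
integrals. For fixed `x > 0` the `σ`-integral is Gaussian and equals `2√π e^{-a²x²}`, so what
remains is `2√π e^{za²} ∫_{√z}^∞ e^{-a²x²} dx`, which is `erfc(a√z)` after the scaling `v = ax`.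
-/

open MeasureTheory Real Set Filter Topology

theorem integral_Ioi_mul_exp_neg_mul_sq {c : ℝ} (hc : 0 < c) (b : ℝ) :
    ∫ x in Ioi b, 2 * x * exp (-c * x ^ 2) = exp (-c * b ^ 2) / c := by
  have hderiv : ∀ x ∈ Ici b,
      HasDerivAt (fun x => exp (-c * x ^ 2) / -c) (2 * x * exp (-c * x ^ 2)) x := by
    intro x _
    refine (((hasDerivAt_pow 2 x).const_mul (-c)).exp.div_const (-c)).congr_deriv ?_
    field_simp
    ring
  have hlim : Tendsto (fun x => exp (-c * x ^ 2) / -c) atTop (𝓝 0) := by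
    have hsq : Tendsto (fun x : ℝ => -c * x ^ 2) atTop atBot :=
      (tendsto_pow_atTop two_ne_zero).const_mul_atTop_of_neg (neg_neg_of_pos hc)
    simpa using (tendsto_exp_atBot.comp hsq).div_const (-c)
  have hint : IntegrableOn (fun x => 2 * x * exp (-c * x ^ 2)) (Ioi b) := by
    simpa only [mul_assoc] using ((integrable_mul_exp_neg_mul_sq hc).const_mul 2).integrableOn
  rw [integral_Ioi_of_hasDerivAt_of_tendsto' hderiv hint hlim]
  ring

theorem mul_exp_neg_add_mul_sq (a x σ : ℝ) :
    2 * x * exp (-(σ ^ 2 + a ^ 2) * x ^ 2) =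
      2 * x * exp (-a ^ 2 * x ^ 2) * exp (-x ^ 2 * σ ^ 2) := by
  rw [mul_assoc (2 * x) (exp _), ← exp_add]
  ring_nf

theorem integral_mul_exp_neg_add_mul_sq (a : ℝ) {x : ℝ} (hx : 0 < x) :
    ∫ σ : ℝ, 2 * x * exp (-(σ ^ 2 + a ^ 2) * x ^ 2) = 2 * √π * exp (-a ^ 2 * x ^ 2) := by
  simp_rw [mul_exp_neg_add_mul_sq a x, integral_const_mul, integral_gaussian,
    sqrt_div' π (sq_nonneg x), sqrt_sq hx.le]
  field_simp

theorem integrable_mul_exp_neg_add_mul_sq {a : ℝ} (ha : a ≠ 0) {b : ℝ} (hb : 0 ≤ b) :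
    Integrable (fun p : ℝ × ℝ => 2 * p.2 * exp (-(p.1 ^ 2 + a ^ 2) * p.2 ^ 2))
      (volume.prod (volume.restrict (Ioi b))) := by
  have hcont : Continuous fun p : ℝ × ℝ => 2 * p.2 * exp (-(p.1 ^ 2 + a ^ 2) * p.2 ^ 2) := by
    fun_prop
  rw [integrable_prod_iff' hcont.aestronglyMeasurable]
  have hpos : ∀ᵐ x ∂volume.restrict (Ioi b), 0 < x :=
    (ae_restrict_mem measurableSet_Ioi).mono fun x hx => hb.trans_lt hx
  constructor
  · filter_upwards [hpos] with x hx
    simp_rw [mul_exp_neg_add_mul_sq a x]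
    exact (integrable_exp_neg_mul_sq (by positivity)).const_mul _
  · have ha2 : 0 < a ^ 2 := by positivity
    refine Integrable.congr (((integrable_exp_neg_mul_sq ha2).const_mul (2 * √π)).integrableOn) ?_
    filter_upwards [hpos] with x hx
    simp_rw [norm_of_nonneg (by positivity : (0 : ℝ) ≤ 2 * x * exp _)]
    exact (integral_mul_exp_neg_add_mul_sq a hx).symm

theorem integral_Ioi_exp_neg_sq_mul_sq {a : ℝ} (ha : 0 < a) (b : ℝ) :
    ∫ x in Ioi b, exp (-a ^ 2 * x ^ 2) = √π / (2 * a) * erfc (a * b) := by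
  have h := integral_comp_mul_left_Ioi (fun v => exp (-v ^ 2)) b ha
  simp only [mul_pow, neg_mul, smul_eq_mul] at h ⊢
  rw [h, erfc]
  have : √π ≠ 0 := by positivity
  field_simp

/-- `∫ e^{-zσ²}/(σ²+a²) dσ = (π/a) e^{za²} erfc(a√z)`. -/
theorem stmt13 (a z : ℝ) (ha : 0 < a) (hz : 0 < z) :
    ∫ σ : ℝ, Real.exp (-z * σ ^ 2) / (σ ^ 2 + a ^ 2) =
      Real.pi / a * Real.exp (z * a ^ 2) * erfc (a * Real.sqrt z) := by
  have hsection : ∀ σ : ℝ, exp (-z * σ ^ 2) / (σ ^ 2 + a ^ 2) =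
      exp (z * a ^ 2) * ∫ x in Ioi √z, 2 * x * exp (-(σ ^ 2 + a ^ 2) * x ^ 2) := by
    intro σ
    rw [integral_Ioi_mul_exp_neg_mul_sq (by positivity), sq_sqrt hz.le, mul_div_assoc', ← exp_add]
    ring_nf
  calc ∫ σ : ℝ, exp (-z * σ ^ 2) / (σ ^ 2 + a ^ 2)
      = exp (z * a ^ 2) * ∫ x in Ioi √z, ∫ σ : ℝ, 2 * x * exp (-(σ ^ 2 + a ^ 2) * x ^ 2) := by
        simp_rw [hsection]
        rw [integral_const_mul,
          integral_integral_swap (integrable_mul_exp_neg_add_mul_sq ha.ne' (sqrt_nonneg z))]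
    _ = exp (z * a ^ 2) * ∫ x in Ioi √z, 2 * √π * exp (-a ^ 2 * x ^ 2) := by
        congr 1
        refine setIntegral_congr_fun measurableSet_Ioi fun x hx => ?_
        exact integral_mul_exp_neg_add_mul_sq a ((sqrt_nonneg z).trans_lt hx)
    _ = π / a * exp (z * a ^ 2) * erfc (a * √z) := by
        rw [integral_const_mul, integral_Ioi_exp_neg_sq_mul_sq ha]
        have := sq_sqrt pi_pos.le
        field_simp
        linear_combination erfc (a * √z) * this
end

section
/- Let a ∈ (0, 1) and z > 0, and define g(σ) = −1 / [ √(1+σ²) √(1−a²) ( √(1+σ²) + √(1−a²) ) ] for σ ∈ ℝ. Then ∫_{−∞}^{∞} e^{−z σ²} / [(σ² + a²)√(1+σ²)] dσ = (π / (a √(1−a²))) e^{z a²} erfc(a √z) + ∫_{−∞}^{∞} e^{−z σ²} g(σ) dσ, where erfc(x) = (2/√π) ∫_x^∞ e^{−t²} dt. -/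
/-!
Write `b = √(1 - a²)` and `s = √(1 + σ²)`. Since `s² - b² = σ² + a²`, the integrand splits as
`e^{-zσ²} / (b (σ² + a²)) + e^{-zσ²} g(σ)`, so it remains to evaluate
`∫ e^{-zσ²} / (σ² + a²) dσ`. Writing `1 / (σ² + a²) = ∫₀^∞ e^{-(σ² + a²) t} dt` and integrating
in `σ` first (Fubini) turns it into `∫₀^∞ e^{-a² t} √(π / (z + t)) dt`, and the substitution
`t = u² - z` turns this into a Gaussian tail, i.e. an `erfc`.
-/

open Real MeasureTheory Set

lemma integral_exp_neg_mul_Ioi_zero {c : ℝ} (hc : 0 < c) :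
    ∫ t in Ioi (0 : ℝ), exp (-c * t) = 1 / c := by
  rw [integral_exp_mul_Ioi (neg_neg_of_pos hc), mul_zero, exp_zero, neg_div_neg_eq]

lemma integrable_exp_neg_mul_sq_div {z c : ℝ} (hz : 0 < z) (hc : 0 < c) {h : ℝ → ℝ}
    (hh : Continuous h) (hch : ∀ σ, c ≤ h σ) :
    Integrable fun σ => exp (-z * σ ^ 2) / h σ := by
  have hbound : ∀ σ, ‖(h σ)⁻¹‖ ≤ c⁻¹ := fun σ => by
    rw [norm_inv, Real.norm_of_nonneg (hc.trans_le (hch σ)).le]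
    exact inv_anti₀ hc (hch σ)
  simpa only [div_eq_mul_inv] using (integrable_exp_neg_mul_sq hz).mul_bdd (g := fun σ => (h σ)⁻¹)
    (hh.inv₀ fun σ => (hc.trans_le (hch σ)).ne').aestronglyMeasurable (ae_of_all _ hbound)

lemma integrable_exp_neg_mul_sq_mul_exp_neg_mul {a z : ℝ} (ha : a ≠ 0) (hz : 0 < z) :
    Integrable (fun p : ℝ × ℝ => exp (-z * p.1 ^ 2) * exp (-(p.1 ^ 2 + a ^ 2) * p.2))
      (volume.prod (volume.restrict (Ioi 0))) := by
  have ha2 : 0 < a ^ 2 := by positivity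
  have hpos : ∀ σ : ℝ, 0 < σ ^ 2 + a ^ 2 := fun σ => by positivity
  refine (integrable_prod_iff (by fun_prop)).2 ⟨ae_of_all _ fun σ => ?_, ?_⟩
  · exact (exp_neg_integrableOn_Ioi 0 (hpos σ)).const_mul (exp (-z * σ ^ 2))
  · have hnorm : ∀ σ : ℝ, ∫ t in Ioi (0 : ℝ), ‖exp (-z * σ ^ 2) * exp (-(σ ^ 2 + a ^ 2) * t)‖ =
        exp (-z * σ ^ 2) / (σ ^ 2 + a ^ 2) := fun σ => by
      simp only [norm_mul, Real.norm_of_nonneg (exp_pos _).le]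
      rw [integral_const_mul, integral_exp_neg_mul_Ioi_zero (hpos σ), mul_one_div]
    simp only [hnorm]
    exact integrable_exp_neg_mul_sq_div hz ha2 (by fun_prop)
      fun σ => le_add_of_nonneg_left (sq_nonneg σ)

lemma integral_Ioi_zero_eq_integral_Ioi_sqrt {E : Type*} [NormedAddCommGroup E]
    [NormedSpace ℝ E] {z : ℝ} (hz : 0 ≤ z) (f : ℝ → E) :
    ∫ t in Ioi (0 : ℝ), f t = ∫ u in Ioi √z, (2 * u) • f (u ^ 2 - z) := by
  have hpos : ∀ u ∈ Ioi √z, 0 < u := fun u hu => (sqrt_nonneg z).trans_lt hu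
  have himage : (fun u : ℝ => u ^ 2 - z) '' Ioi √z = Ioi 0 := by
    ext t
    simp only [mem_image, mem_Ioi]
    constructor
    · rintro ⟨u, hu, rfl⟩
      have := (sqrt_lt' (hpos u hu)).1 hu
      linarith
    · intro ht
      refine ⟨√(z + t), sqrt_lt_sqrt hz (by linarith), ?_⟩
      rw [sq_sqrt (by linarith)]
      ring
  have hderiv : ∀ u ∈ Ioi √z,
      HasDerivWithinAt (fun u : ℝ => u ^ 2 - z) (2 * u) (Ioi √z) u := fun u _ => by
    simpa using ((hasDerivAt_pow 2 u).sub_const z).hasDerivWithinAt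
  have hinj : InjOn (fun u : ℝ => u ^ 2 - z) (Ioi √z) := fun u hu v hv huv => by
    have := hpos u hu
    have := hpos v hv
    simp only [sub_left_inj] at huv
    nlinarith
  rw [← himage, integral_image_eq_integral_abs_deriv_smul measurableSet_Ioi hderiv hinj]
  refine setIntegral_congr_fun measurableSet_Ioi fun u hu => ?_
  rw [abs_of_pos (by linarith [hpos u hu])]

lemma integral_Ioi_exp_neg_mul_mul_sqrt_pi_div {a z : ℝ} (ha : 0 < a) (hz : 0 ≤ z) :
    ∫ t in Ioi (0 : ℝ), exp (-a ^ 2 * t) * √(π / (z + t)) =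
      π / a * exp (z * a ^ 2) * erfc (a * √z) := by
  have hgauss : ∀ u ∈ Ioi √z, (2 * u) • (exp (-a ^ 2 * (u ^ 2 - z)) * √(π / (z + (u ^ 2 - z)))) =
      2 * √π * exp (z * a ^ 2) * exp (-(a * u) ^ 2) := fun u hu => by
    have hu : 0 < u := (sqrt_nonneg z).trans_lt hu
    rw [smul_eq_mul, add_sub_cancel, sqrt_div pi_nonneg, sqrt_sq hu.le,
      show -a ^ 2 * (u ^ 2 - z) = z * a ^ 2 + -(a * u) ^ 2 by ring, exp_add]
    field_simp
  rw [integral_Ioi_zero_eq_integral_Ioi_sqrt hz, setIntegral_congr_fun measurableSet_Ioi hgauss,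
    integral_const_mul, integral_comp_mul_left_Ioi (fun v => exp (-v ^ 2)) _ ha, smul_eq_mul, erfc]
  field_simp
  rw [sq_sqrt pi_nonneg]
  ring

theorem integral_exp_neg_mul_sq_div_sq_add_sq {a z : ℝ} (ha : 0 < a) (hz : 0 < z) :
    ∫ σ : ℝ, exp (-z * σ ^ 2) / (σ ^ 2 + a ^ 2) = π / a * exp (z * a ^ 2) * erfc (a * √z) := by
  calc ∫ σ : ℝ, exp (-z * σ ^ 2) / (σ ^ 2 + a ^ 2)
      = ∫ σ : ℝ, ∫ t in Ioi (0 : ℝ), exp (-z * σ ^ 2) * exp (-(σ ^ 2 + a ^ 2) * t) := by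
        congr 1 with σ
        rw [integral_const_mul, integral_exp_neg_mul_Ioi_zero (by positivity), mul_one_div]
    _ = ∫ t in Ioi (0 : ℝ), ∫ σ : ℝ, exp (-z * σ ^ 2) * exp (-(σ ^ 2 + a ^ 2) * t) :=
        integral_integral_swap (integrable_exp_neg_mul_sq_mul_exp_neg_mul ha.ne' hz)
    _ = ∫ t in Ioi (0 : ℝ), exp (-a ^ 2 * t) * √(π / (z + t)) := by
        refine setIntegral_congr_fun measurableSet_Ioi fun t _ => ?_
        have hexp : ∀ σ : ℝ, exp (-z * σ ^ 2) * exp (-(σ ^ 2 + a ^ 2) * t) =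
            exp (-a ^ 2 * t) * exp (-(z + t) * σ ^ 2) := fun σ => by
          rw [← exp_add, ← exp_add]
          ring_nf
        simp only [hexp]
        rw [integral_const_mul, integral_gaussian]
    _ = π / a * exp (z * a ^ 2) * erfc (a * √z) := integral_Ioi_exp_neg_mul_mul_sqrt_pi_div ha hz.le

lemma mul_inv_eq_inv_mul_inv_sub_of_sq_sub_sq {b c s : ℝ} (hb : 0 < b) (hs : 0 < s)
    (hc : c ≠ 0) (hbcs : s ^ 2 - b ^ 2 = c) :
    (c * s)⁻¹ = b⁻¹ * c⁻¹ - (s * b * (s + b))⁻¹ := by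
  have : 0 < s + b := by positivity
  field_simp
  linear_combination -hbcs

/-- splitting off the pole contribution in terms of `erfc`. -/
theorem stmt15 (a z : ℝ) (ha : a ∈ Set.Ioo (0 : ℝ) 1) (hz : 0 < z)
    (g : ℝ → ℝ)
    (hg : ∀ σ : ℝ, g σ =
      -1 / (Real.sqrt (1 + σ ^ 2) * Real.sqrt (1 - a ^ 2) *
        (Real.sqrt (1 + σ ^ 2) + Real.sqrt (1 - a ^ 2)))) :
    ∫ σ : ℝ, Real.exp (-z * σ ^ 2) / ((σ ^ 2 + a ^ 2) * Real.sqrt (1 + σ ^ 2)) =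
      Real.pi / (a * Real.sqrt (1 - a ^ 2)) * Real.exp (z * a ^ 2) *
          erfc (a * Real.sqrt z) +
        ∫ σ : ℝ, Real.exp (-z * σ ^ 2) * g σ := by
  obtain ⟨ha0, ha1⟩ := ha
  have hb : 0 < √(1 - a ^ 2) := sqrt_pos.2 (by nlinarith)
  have hs : ∀ σ : ℝ, 1 ≤ √(1 + σ ^ 2) := fun σ =>
    one_le_sqrt.2 (le_add_of_nonneg_right (sq_nonneg σ))
  have hsplit : ∀ σ : ℝ, exp (-z * σ ^ 2) * g σ =
      exp (-z * σ ^ 2) / ((σ ^ 2 + a ^ 2) * √(1 + σ ^ 2)) -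
        (√(1 - a ^ 2))⁻¹ * (exp (-z * σ ^ 2) / (σ ^ 2 + a ^ 2)) := fun σ => by
    have hdecomp := mul_inv_eq_inv_mul_inv_sub_of_sq_sub_sq (s := √(1 + σ ^ 2))
      (c := σ ^ 2 + a ^ 2) hb (by linarith [hs σ]) (by positivity)
      (by rw [sq_sqrt (by positivity), sq_sqrt (by nlinarith)]; ring)
    rw [hg, div_eq_mul_inv (exp _), hdecomp]
    ring
  have hmain : Integrable fun σ : ℝ => exp (-z * σ ^ 2) / ((σ ^ 2 + a ^ 2) * √(1 + σ ^ 2)) :=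
    integrable_exp_neg_mul_sq_div hz (by positivity) (by fun_prop) fun σ =>
      (le_add_of_nonneg_left (sq_nonneg σ)).trans (le_mul_of_one_le_right (by positivity) (hs σ))
  have hpole : Integrable fun σ : ℝ => exp (-z * σ ^ 2) / (σ ^ 2 + a ^ 2) :=
    integrable_exp_neg_mul_sq_div hz (by positivity) (by fun_prop) fun σ =>
      le_add_of_nonneg_left (sq_nonneg σ)
  rw [integral_congr_ae (ae_of_all _ hsplit), integral_sub hmain (hpole.const_mul _),
    integral_const_mul, integral_exp_neg_mul_sq_div_sq_add_sq ha0 hz]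
  field_simp
  ring
end
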